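/- arXiv:2208.07335 — 5 statements merged into one kernel-verified Lean document; each statement's English description precedes it below -/
import Mathlib

section
/- Let H be a graph on 8 vertices with independence number at most 2. If H contains no K_4 subgraph, then every vertex of H has degree at least 4 and at most 5. -/
/-!
In a triangle-free graph the neighbourhood of a vertex is independent, so if moreover the
complement is `K_n`-free, every degree is less than `n`. Applied to `Hᶜ` this shows that every
vertex has at most 3 non-neighbours. Applied to a graph and to its complement it gives the Ramsey
bound `R(3,3) ≤ 6`; since `H` is `K₄`-free, the neighbourhood of a vertex induces a triangle-free
graph without independent triples, so it has at most 5 vertices.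
-/

namespace SimpleGraph

variable {V : Type*} {G : SimpleGraph V}

theorem IsClique.card_lt_of_cliqueFree {n : ℕ} (h : G.CliqueFree n) {s : Finset V}
    (hs : G.IsClique (s : Set V)) : s.card < n := by
  by_contra! hn
  obtain ⟨t, hts, rfl⟩ := Finset.exists_subset_card_eq hn
  exact h t ⟨hs.subset (Finset.coe_subset.mpr hts), rfl⟩

theorem degree_lt_of_cliqueFree_three_of_compl_cliqueFree [Fintype V] [DecidableRel G.Adj]
    {n : ℕ} (h : G.CliqueFree 3) (hc : Gᶜ.CliqueFree n) (v : V) : G.degree v < n := by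
  refine IsClique.card_lt_of_cliqueFree hc ?_
  rw [coe_neighborFinset, isClique_compl]
  exact G.isIndepSet_neighborSet_of_triangleFree h v

theorem card_le_five_of_cliqueFree_three_of_compl [Fintype V] (h : G.CliqueFree 3)
    (hc : Gᶜ.CliqueFree 3) : Fintype.card V ≤ 5 := by
  classical
  cases isEmpty_or_nonempty V
  · simp
  obtain ⟨v⟩ := ‹Nonempty V›
  have hG := degree_lt_of_cliqueFree_three_of_compl_cliqueFree h hc v
  have hGc := degree_lt_of_cliqueFree_three_of_compl_cliqueFree hc ((compl_compl G).symm ▸ h) v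
  rw [degree_compl] at hGc
  have := Fintype.card_pos (α := V)
  omega

theorem CliqueFree.induce_neighborSet {n : ℕ} (h : G.CliqueFree (n + 1)) (v : V) :
    (G.induce (G.neighborSet v)).CliqueFree n := by
  rw [cliqueFree_induce_iff, ← Set.univ_inter (G.neighborSet v)]
  exact CliqueFreeOn.of_succ G h.cliqueFreeOn (Set.mem_univ v)

theorem CliqueFree.compl_induce {n : ℕ} (h : Gᶜ.CliqueFree n) (s : Set V) :
    (G.induce s)ᶜ.CliqueFree n :=
  h.comap (Embedding.complEquiv (Embedding.induce s)).isContained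

theorem degree_le_five_of_cliqueFree_four [Fintype V] [DecidableRel G.Adj]
    (h : G.CliqueFree 4) (hc : Gᶜ.CliqueFree 3) (v : V) : G.degree v ≤ 5 := by
  rw [← card_neighborSet_eq_degree]
  exact card_le_five_of_cliqueFree_three_of_compl (h.induce_neighborSet v) (hc.compl_induce _)

end SimpleGraph

/-- Let H be a graph on 8 vertices with independence number at most 2
(no independent set of 3 vertices, i.e. the complement is K₃-free). If H contains no
K₄ subgraph, then every vertex of H has degree at least 4 and at most 5. -/
theorem stmt0 (H : SimpleGraph (Fin 8)) [DecidableRel H.Adj]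
    (hα : Hᶜ.CliqueFree 3) (hK4 : H.CliqueFree 4) :
    ∀ v : Fin 8, 4 ≤ H.degree v ∧ H.degree v ≤ 5 := by
  intro v
  refine ⟨?_, H.degree_le_five_of_cliqueFree_four hK4 hα v⟩
  have hcodegree : Hᶜ.degree v < 4 :=
    SimpleGraph.degree_lt_of_cliqueFree_three_of_compl_cliqueFree hα ((compl_compl H).symm ▸ hK4) v
  rw [SimpleGraph.degree_compl, Fintype.card_fin] at hcodegree
  omega
end

section
/- Let G be a k-contraction-critical graph with k ≥ 2. Then for every vertex v of G, the independence number of the subgraph induced on the neighborhood of v is at most d(v) − k + 2. -/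
/-!
Let `s` be an independent set of neighbours of `v`. Contracting the star `s ∪ {v}` to a single
vertex is a proper minor, so it is `(k-1)`-colourable; pulled back to `G`, this colouring is
proper on `G - v` (as `s` is independent) and gives all of `s` the colour of `v`. Since
`χ(G) = k`, a `(k-1)`-colouring of `G - v` must use every colour on `N(v)`, for otherwise `v`
could be coloured too. But `N(v)` then sees at most `1 + (d(v) - |s|)` colours. For `s = ∅`, the
same count applied to a colouring of the proper minor `G - v` gives `k - 1 ≤ d(v)`.
-/

/-- `MinorOf H G` means `H` is a minor of `G`: there are nonempty, pairwise disjoint,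
connected branch sets in `G`, one for each vertex of `H`, with an edge of `G` between the
branch sets of any two adjacent vertices of `H`. -/
def MinorOf {W V : Type} (H : SimpleGraph W) (G : SimpleGraph V) : Prop :=
  ∃ f : W → Set V,
    (∀ w, (f w).Nonempty) ∧
    (∀ w, (G.induce (f w)).Connected) ∧
    (Pairwise fun w w' => Disjoint (f w) (f w')) ∧
    (∀ w w', H.Adj w w' → ∃ v ∈ f w, ∃ v' ∈ f w', G.Adj v v')

/-- A graph `G` is `k`-contraction-critical if its chromatic number is `k` but every
proper minor of `G` (a minor not isomorphic to `G`) is `(k-1)`-colorable. -/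
def ContractionCritical (k : ℕ) {V : Type} [Fintype V] (G : SimpleGraph V) : Prop :=
  G.chromaticNumber = k ∧
  ∀ (W : Type) (_ : Fintype W) (H : SimpleGraph W),
    MinorOf H G → IsEmpty (H ≃g G) → H.Colorable (k - 1)

namespace Finset

variable {V : Type} [DecidableEq V] {v : V}

def mergeInto (s : Finset V) (hv : v ∉ s) (x : V) : {x // x ∉ s} :=
  if h : x ∈ s then ⟨v, hv⟩ else ⟨x, h⟩

lemma preimage_mergeInto_singleton {s : Finset V} (hv : v ∉ s) (w : {x // x ∉ s}) :
    s.mergeInto hv ⁻¹' {w} = if w.1 = v then insert v ↑s else {w.1} := by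
  ext x
  by_cases hx : x ∈ s
  · have hxw : x ≠ w.1 := ne_of_mem_of_not_mem hx w.2
    split_ifs with hw <;> simp [mergeInto, hx, Subtype.ext_iff, hw, hxw, eq_comm]
  · split_ifs with hw <;> simp [mergeInto, hx, Subtype.ext_iff, hw, eq_comm]

end Finset

namespace SimpleGraph

variable {V W : Type} (G : SimpleGraph V)

lemma connected_induce_singleton (a : V) : (G.induce {a}).Connected :=
  Connected.of_subsingleton

lemma connected_induce_insert_of_forall_adj {v : V} {s : Set V} (h : ∀ x ∈ s, G.Adj v x) :
    (G.induce (insert v s)).Connected := by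
  rw [connected_iff_exists_forall_reachable]
  refine ⟨⟨v, Set.mem_insert v s⟩, ?_⟩
  rintro ⟨x, rfl | hx⟩
  · rfl
  · exact Adj.reachable (by exact h x hx)

lemma minorOf_induce (S : Set V) : MinorOf (G.induce S) G :=
  ⟨fun w => {w.1}, fun _ => Set.singleton_nonempty _, fun _ => G.connected_induce_singleton _,
    fun _ _ hne => Set.disjoint_singleton.mpr (Subtype.val_injective.ne hne),
    fun w w' h => ⟨w, rfl, w', rfl, h⟩⟩

def contract (p : V → W) : SimpleGraph W :=
  fromRel fun a b => ∃ x y, p x = a ∧ p y = b ∧ G.Adj x y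

variable {G}

lemma contract_adj_of_adj {p : V → W} {x y : V} (h : G.Adj x y) (hne : p x ≠ p y) :
    (G.contract p).Adj (p x) (p y) :=
  (fromRel_adj _ _ _).mpr ⟨hne, Or.inl ⟨x, y, rfl, rfl, h⟩⟩

lemma minorOf_contract {p : V → W} (hp : ∀ w, (G.induce (p ⁻¹' {w})).Connected) :
    MinorOf (G.contract p) G := by
  refine ⟨fun w => p ⁻¹' {w}, fun w => ?_, hp, fun w w' hne => ?_, fun w w' h => ?_⟩
  · obtain ⟨x⟩ := (hp w).nonempty
    exact ⟨x, x.2⟩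
  · exact Set.disjoint_singleton.mpr hne |>.preimage p
  · obtain ⟨-, ⟨x, y, rfl, rfl, hxy⟩ | ⟨x, y, rfl, rfl, hxy⟩⟩ := (fromRel_adj _ _ _).mp h
    · exact ⟨x, rfl, y, rfl, hxy⟩
    · exact ⟨y, rfl, x, rfl, hxy.symm⟩

lemma le_card_image_neighborFinset [Fintype V] [DecidableRel G.Adj] {n : ℕ}
    (hn : ¬ G.Colorable n) (v : V) (c : V → Fin n)
    (hc : ∀ x y, G.Adj x y → x ≠ v → y ≠ v → c x ≠ c y) :
    n ≤ ((G.neighborFinset v).image c).card := by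
  classical
  by_contra! hlt
  obtain ⟨β, -, hβ⟩ : ∃ β ∈ Finset.univ, β ∉ (G.neighborFinset v).image c :=
    Finset.exists_of_ssubset (Finset.ssubset_univ_iff.mpr fun h => by
      simp [h] at hlt)
  refine hn ⟨Coloring.mk (Function.update c v β) fun {x y} hxy => ?_⟩
  have hβ' : ∀ u, G.Adj v u → c u ≠ β := fun u hu h =>
    hβ (Finset.mem_image.mpr ⟨u, (G.mem_neighborFinset v u).mpr hu, h⟩)
  rcases eq_or_ne x v with rfl | hx
  · simpa [hxy.ne'] using (hβ' y hxy).symm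
  rcases eq_or_ne y v with rfl | hy
  · simpa [hx] using hβ' x hxy.symm
  simpa [hx, hy] using hc x y hxy hx hy

variable [DecidableEq V] {s : Finset V} {v : V}

lemma connected_induce_preimage_mergeInto (hs : ∀ x ∈ s, G.Adj v x) (hv : v ∉ s)
    (w : {x // x ∉ s}) : (G.induce (s.mergeInto hv ⁻¹' {w})).Connected := by
  by_cases hw : w.1 = v
  · rw [Finset.preimage_mergeInto_singleton, if_pos hw]
    exact G.connected_induce_insert_of_forall_adj hs
  · rw [Finset.preimage_mergeInto_singleton, if_neg hw]
    exact G.connected_induce_singleton _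

lemma mergeInto_ne_of_adj (hind : G.IsIndepSet s) (hv : v ∉ s) {x y : V} (hxy : G.Adj x y)
    (hx : x ≠ v) (hy : y ≠ v) : s.mergeInto hv x ≠ s.mergeInto hv y := by
  by_cases hxs : x ∈ s <;> by_cases hys : y ∈ s
  · exact absurd hxy (hind hxs hys hxy.ne)
  all_goals simp [Finset.mergeInto, hxs, hys, Subtype.ext_iff, hx, Ne.symm hy, hxy.ne]

end SimpleGraph

namespace ContractionCritical

open SimpleGraph Finset

variable {k : ℕ} {V : Type} [Fintype V] {G : SimpleGraph V}

lemma not_colorable [Nonempty V] (hG : ContractionCritical k G) : ¬ G.Colorable (k - 1) := by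
  intro h
  rcases Nat.eq_zero_or_pos k with rfl | hk
  · exact not_isEmpty_of_nonempty V (colorable_zero_iff.mp h)
  · have := h.chromaticNumber_le
    rw [hG.1, Nat.cast_le] at this
    omega

lemma colorable_of_card_lt (hG : ContractionCritical k G) {W : Type} [Fintype W]
    {H : SimpleGraph W} (hH : MinorOf H G) (hcard : Fintype.card W < Fintype.card V) :
    H.Colorable (k - 1) :=
  hG.2 W inferInstance H hH ⟨fun e => hcard.ne (Fintype.card_congr e.toEquiv)⟩

variable [DecidableRel G.Adj]

lemma pred_le_degree (hG : ContractionCritical k G) (v : V) : k - 1 ≤ G.degree v := by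
  classical
  have : Nonempty V := ⟨v⟩
  obtain ⟨c⟩ := hG.colorable_of_card_lt (G.minorOf_induce {v}ᶜ)
    (Fintype.card_subtype_lt (x := v) (by simp))
  rcases Nat.eq_zero_or_pos (k - 1) with h0 | hpos
  · omega
  let c' : V → Fin (k - 1) := fun x => if h : x = v then ⟨0, hpos⟩ else c ⟨x, h⟩
  calc k - 1 ≤ ((G.neighborFinset v).image c').card :=
        le_card_image_neighborFinset hG.not_colorable v c' fun x y hxy hx hy => by
          simpa [c', hx, hy] using c.valid (show (G.induce {v}ᶜ).Adj ⟨x, hx⟩ ⟨y, hy⟩ from hxy)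
    _ ≤ (G.neighborFinset v).card := card_image_le
    _ = G.degree v := G.card_neighborFinset_eq_degree v

lemma pred_le_degree_sub_card_add_one (hG : ContractionCritical k G) {v : V} {s : Finset V}
    (hsN : ↑s ⊆ G.neighborSet v) (hind : G.IsIndepSet s) (hne : s.Nonempty) :
    k - 1 ≤ G.degree v - s.card + 1 := by
  classical
  have : Nonempty V := ⟨v⟩
  have hv : v ∉ s := fun h => G.notMem_neighborSet_self (hsN h)
  have hsub : s ⊆ G.neighborFinset v := fun x hx => (G.mem_neighborFinset v x).mpr (hsN hx)
  obtain ⟨c⟩ := hG.colorable_of_card_lt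
    (minorOf_contract (connected_induce_preimage_mergeInto (fun x hx => hsN hx) hv))
    (Fintype.card_subtype_lt (not_not.mpr hne.choose_spec))
  let c' : V → Fin (k - 1) := c ∘ s.mergeInto hv
  have himage :
      (G.neighborFinset v).image c' ⊆ insert (c' v) ((G.neighborFinset v \ s).image c') := by
    rintro _ hβ
    obtain ⟨x, hxN, rfl⟩ := mem_image.mp hβ
    by_cases hxs : x ∈ s
    · simp [c', mergeInto, hxs, hv]
    · exact mem_insert_of_mem (mem_image_of_mem _ (mem_sdiff.mpr ⟨hxN, hxs⟩))
  calc k - 1 ≤ ((G.neighborFinset v).image c').card :=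
        le_card_image_neighborFinset hG.not_colorable v c' fun x y hxy hx hy =>
          c.valid (contract_adj_of_adj hxy (mergeInto_ne_of_adj hind hv hxy hx hy))
    _ ≤ ((G.neighborFinset v \ s).image c').card + 1 :=
        (card_le_card himage).trans (card_insert_le _ _)
    _ ≤ (G.neighborFinset v \ s).card + 1 := by grw [card_image_le]
    _ = G.degree v - s.card + 1 := by
        rw [card_sdiff_of_subset hsub, card_neighborFinset_eq_degree]

end ContractionCritical

theorem stmt9_general (k : ℕ) (V : Type) [Fintype V] (G : SimpleGraph V)
    [DecidableRel G.Adj] (hG : ContractionCritical k G) :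
    ∀ v : V, ∀ s : Finset V, ↑s ⊆ G.neighborSet v →
      (∀ a ∈ s, ∀ b ∈ s, ¬ G.Adj a b) →
      s.card + k ≤ G.degree v + 2 := by
  intro v s hsN hind
  have hcard : s.card ≤ G.degree v := by
    rw [← G.card_neighborFinset_eq_degree]
    exact Finset.card_le_card fun x hx => (G.mem_neighborFinset v x).mpr (hsN hx)
  rcases s.eq_empty_or_nonempty with rfl | hne
  · have := hG.pred_le_degree v
    simp only [Finset.card_empty, zero_add]
    omega
  · have := hG.pred_le_degree_sub_card_add_one hsN (fun a ha b hb _ => hind a ha b hb) hne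
    omega

/-- Dirac's lemma: In a k-contraction-critical graph (k ≥ 2), for every
vertex v the independence number of the subgraph induced on N(v) is at most
d(v) − k + 2, i.e. any independent subset s of N(v) satisfies |s| + k ≤ d(v) + 2. -/
theorem stmt9 (k : ℕ) (hk : 2 ≤ k) (V : Type) [Fintype V] (G : SimpleGraph V)
    [DecidableRel G.Adj] (hG : ContractionCritical k G) :
    ∀ v : V, ∀ s : Finset V, ↑s ⊆ G.neighborSet v →
      (∀ a ∈ s, ∀ b ∈ s, ¬ G.Adj a b) →
      s.card + k ≤ G.degree v + 2 :=
  stmt9_general k V G hG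
end

section
/- Let G be a graph containing a subgraph H on at most 7 vertices such that H has a K_6 minor, and suppose G is 7-connected (and has more vertices than H). Then G has a K_7 minor. -/
open SimpleGraph Set

/-- If any two vertices of `s` are joined by a walk staying in `s`, the induced graph is
connected. -/
lemma myInduceConn {V : Type} {G : SimpleGraph V} {s : Set V} (hne : s.Nonempty)
    (h : ∀ u ∈ s, ∀ v ∈ s, ∃ p : G.Walk u v, ∀ x ∈ p.support, x ∈ s) :
    (G.induce s).Connected := by
  rw [SimpleGraph.connected_induce_iff,
    SimpleGraph.Subgraph.connected_iff_forall_exists_walk_subgraph]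
  refine ⟨by simpa using hne, ?_⟩
  intro u v hu hv
  simp only [Subgraph.induce_verts] at hu hv
  obtain ⟨p, hp⟩ := h u hu v hv
  exact ⟨p, le_trans p.toSubgraph_le_induce_support
    (SimpleGraph.Subgraph.induce_mono le_rfl hp)⟩

/-- The support of a connected component induces a connected graph. -/
lemma compSuppConn {α : Type} (A : SimpleGraph α) (c : A.ConnectedComponent) :
    (A.induce c.supp).Connected := by
  classical
  obtain ⟨x, hx⟩ := c.exists_rep
  refine myInduceConn ⟨x, by rwa [ConnectedComponent.mem_supp_iff]⟩ ?_
  intro u hu v hv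
  rw [ConnectedComponent.mem_supp_iff] at hu hv
  obtain ⟨p⟩ := ConnectedComponent.exact (hu.trans hv.symm)
  refine ⟨p, fun y hy => ?_⟩
  rw [ConnectedComponent.mem_supp_iff, ← hu]
  exact ConnectedComponent.sound ⟨p.takeUntil y hy⟩ |>.symm

/-- Transfer connectivity of an induced graph along an adjacency-preserving map. -/
lemma connImage {α V : Type} {A : SimpleGraph α} {G : SimpleGraph V} {s : Set α}
    (hc : (A.induce s).Connected) (m : α → V)
    (hadj : ∀ a b : α, A.Adj a b → G.Adj (m a) (m b)) :
    (G.induce (m '' s)).Connected := by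
  refine hc.map ⟨fun a => ⟨m a.1, ⟨a.1, a.2, rfl⟩⟩, fun hab => hadj _ _ hab⟩ ?_
  rintro ⟨v, a, ha, rfl⟩
  exact ⟨⟨a, ha⟩, rfl⟩


/-- Let G be a 7-connected graph (more than 7 vertices, and still connected
after deleting any set of at most 6 vertices) containing a subgraph H on at most 7
vertices (fewer than G) such that H has a K₆ minor. Then G has a K₇ minor. -/
theorem stmt12 (V : Type) [Fintype V] [DecidableEq V] (G : SimpleGraph V)
    (hcard : 7 < Fintype.card V)
    (hconn : ∀ s : Finset V, s.card ≤ 6 → (G.induce ((↑s : Set V)ᶜ)).Connected)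
    (H : G.Subgraph) (hH7 : H.verts.ncard ≤ 7)
    (hHlt : H.verts.ncard < Fintype.card V)
    (hK6 : MinorOf (⊤ : SimpleGraph (Fin 6)) H.coe) :
    MinorOf (⊤ : SimpleGraph (Fin 7)) G := by
  classical
  obtain ⟨f, hfne, hfconn, hfdis, hfadj⟩ := hK6
  set g : Fin 6 → Set V := fun i => Subtype.val '' f i with hg
  set U : Set V := ⋃ i, g i with hUdef
  have hgsub : ∀ i, g i ⊆ H.verts := by
    rintro i v ⟨a, _, rfl⟩; exact a.2
  have hUsub : U ⊆ H.verts := Set.iUnion_subset hgsub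
  have hUcard : U.ncard ≤ 7 := le_trans (Set.ncard_le_ncard hUsub H.verts.toFinite) hH7
  have hUne : Uᶜ.Nonempty := by
    rw [Set.nonempty_compl]
    intro h
    rw [h, Set.ncard_univ, Nat.card_eq_fintype_card] at hUcard
    omega
  obtain ⟨x, hx⟩ := hUne
  set K := G.induce Uᶜ with hK
  set c := K.connectedComponentMk ⟨x, hx⟩ with hc
  set D : Set V := Subtype.val '' c.supp with hD
  have hDsub : D ⊆ Uᶜ := by rintro v ⟨a, _, rfl⟩; exact a.2
  have hxD : x ∈ D := ⟨⟨x, hx⟩, by rw [ConnectedComponent.mem_supp_iff], rfl⟩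
  have hDconn : (G.induce D).Connected := by
    have := connImage (compSuppConn K c) (Subtype.val : ↥Uᶜ → V) (fun a b hab => hab)
    exact this
  have key : ∀ u ∈ U, ∃ d ∈ D, G.Adj d u := by
    intro u hu
    by_contra hcon
    push_neg at hcon
    have hfin : (U \ {u}).Finite := Set.toFinite _
    have hlt : (U \ {u}).ncard < U.ncard :=
      Set.ncard_lt_ncard (Set.sdiff_singleton_ssubset.mpr hu) U.toFinite
    have hcard6 : hfin.toFinset.card ≤ 6 := by
      rw [← Set.ncard_eq_toFinset_card]
      omega
    have hconn' := hconn hfin.toFinset hcard6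
    rw [Set.Finite.coe_toFinset] at hconn'
    have hus : u ∈ (U \ {u})ᶜ := fun h => h.2 rfl
    have hxs : x ∈ (U \ {u})ᶜ := fun h => hx h.1
    have step : ∀ a b : ↥((U \ {u})ᶜ), (G.induce ((U \ {u})ᶜ)).Adj a b →
        (a : V) ∈ D → (b : V) ∈ D := by
      intro a b hab haD
      by_cases hbu : (b : V) = u
      · refine absurd ?_ (hcon _ haD)
        have h' : G.Adj (a : V) (b : V) := hab
        rwa [hbu] at h'
      · have hbU : (b : V) ∈ Uᶜ := fun hbU => b.2 ⟨hbU, hbu⟩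
        have haU : (a : V) ∈ Uᶜ := hDsub haD
        obtain ⟨a0, ha0, ha0v⟩ := haD
        have hadjK : K.Adj ⟨(a : V), haU⟩ ⟨(b : V), hbU⟩ := hab
        refine ⟨⟨(b : V), hbU⟩, ?_, rfl⟩
        rw [ConnectedComponent.mem_supp_iff]
        have ha0' : K.connectedComponentMk ⟨(a : V), haU⟩ = c := by
          have he : a0 = ⟨(a : V), haU⟩ := Subtype.ext ha0v
          rw [← he]
          exact (ConnectedComponent.mem_supp_iff _ _).mp ha0
        rw [← ha0']
        exact ConnectedComponent.sound hadjK.reachable.symm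
    have allD : ∀ (a b : ↥((U \ {u})ᶜ)) (p : (G.induce ((U \ {u})ᶜ)).Walk a b),
        (a : V) ∈ D → (b : V) ∈ D := by
      intro a b p
      induction p with
      | nil => exact id
      | cons h q ih => intro haD; exact ih (step _ _ h haD)
    obtain ⟨p⟩ := hconn'.preconnected ⟨x, hxs⟩ ⟨u, hus⟩
    exact hDsub (allD _ _ p hxD) hu
  refine ⟨fun i => if h : (i : ℕ) < 6 then g ⟨i, h⟩ else D, ?_, ?_, ?_, ?_⟩
  · intro i
    by_cases h : (i : ℕ) < 6
    · simpa only [dif_pos h] using (hfne ⟨i, h⟩).image _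
    · simpa only [dif_neg h] using ⟨x, hxD⟩
  · intro i
    by_cases h : (i : ℕ) < 6
    · have hr : ((fun i : Fin 7 => if h : (i : ℕ) < 6 then g ⟨i, h⟩ else D) i) = g ⟨i, h⟩ :=
        dif_pos h
      rw [hr]
      exact connImage (hfconn ⟨i, h⟩) (Subtype.val : ↥H.verts → V)
        (fun a b hab => hab.adj_sub)
    · have hr : ((fun i : Fin 7 => if h : (i : ℕ) < 6 then g ⟨i, h⟩ else D) i) = D :=
        dif_neg h
      rw [hr]
      exact hDconn
  · intro i j hij
    have hgU : ∀ k, g k ⊆ U := fun k => Set.subset_iUnion g k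
    by_cases hi : (i : ℕ) < 6 <;> by_cases hj : (j : ℕ) < 6 <;>
      simp only [dif_pos, dif_neg, hi, hj]
    · refine Set.disjoint_image_of_injective Subtype.val_injective (hfdis ?_)
      intro he
      exact hij (Fin.ext (by simpa using congrArg Fin.val he))
    · exact Set.disjoint_of_subset (hgU _) hDsub disjoint_compl_right
    · exact (Set.disjoint_of_subset (hgU _) hDsub disjoint_compl_right).symm
    · exact absurd (Fin.ext (by omega : (i : ℕ) = (j : ℕ))) hij
  · intro w w' hww
    have hww' : w ≠ w' := hww.ne
    have hgU : ∀ k, g k ⊆ U := fun k => Set.subset_iUnion g k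
    by_cases hi : (w : ℕ) < 6 <;> by_cases hj : (w' : ℕ) < 6 <;>
      simp only [dif_pos, dif_neg, hi, hj]
    · obtain ⟨v, hv, v', hv', hadj⟩ := hfadj ⟨w, hi⟩ ⟨w', hj⟩
        (by simp only [SimpleGraph.top_adj]
            intro he; exact hww' (Fin.ext (by simpa using congrArg Fin.val he)))
      exact ⟨v, Set.mem_image_of_mem _ hv, v', Set.mem_image_of_mem _ hv',
        SimpleGraph.Subgraph.Adj.adj_sub hadj⟩
    · obtain ⟨v, hv⟩ := hfne ⟨w, hi⟩
      obtain ⟨d, hd, hadj⟩ := key v (hgU ⟨w, hi⟩ (Set.mem_image_of_mem _ hv))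
      exact ⟨v, Set.mem_image_of_mem _ hv, d, hd, hadj.symm⟩
    · obtain ⟨v, hv⟩ := hfne ⟨w', hj⟩
      obtain ⟨d, hd, hadj⟩ := key v (hgU ⟨w', hj⟩ (Set.mem_image_of_mem _ hv))
      exact ⟨d, hd, v, Set.mem_image_of_mem _ hv, hadj⟩
    · exact absurd (Fin.ext (by omega : (w : ℕ) = (w' : ℕ))) hww'
end

section
/- Let G be a graph, v a vertex of degree 8 in G, such that the neighborhood N(v) induces a subgraph with independence number at most 2 and no K_5 subgraph. Suppose moreover that the induced subgraph J on some 4 vertices {w_5,w_6,w_7,w_8} of N(v) is isomorphic to K_3 ∪ K_1 (a triangle plus isolated vertex w_8), and the other 4 vertices {w_1,w_2,w_3,w_4} of N(v) form a clique. Then w_8 has exactly one non-neighbor w_1 in {w_1,w_2,w_3,w_4}, w_1 is complete to {w_5,w_6,w_7}, and N(v) contains two disjoint 4-cliques {w_8,w_2,w_3,w_4} and {w_1,w_5,w_6,w_7}. -/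
lemma clique4 {V : Type} [DecidableEq V] (G : SimpleGraph V) (a b c d : V)
    (hab : G.Adj a b) (hac : G.Adj a c) (had : G.Adj a d)
    (hbc : G.Adj b c) (hbd : G.Adj b d) (hcd : G.Adj c d) :
    G.IsNClique 4 ({a, b, c, d} : Finset V) := by
  constructor
  · intro x hx y hy hxy
    simp only [Finset.coe_insert, Set.mem_insert_iff, Finset.coe_singleton,
      Set.mem_singleton_iff] at hx hy
    rcases hx with rfl | rfl | rfl | rfl <;> rcases hy with rfl | rfl | rfl | rfl <;>
      first
        | exact (hxy rfl).elim
        | assumption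
        | exact .symm (by assumption)
  · rw [Finset.card_insert_of_notMem (by simp [hab.ne, hac.ne, had.ne]),
      Finset.card_insert_of_notMem (by simp [hbc.ne, hbd.ne]),
      Finset.card_insert_of_notMem (by simp [hcd.ne]), Finset.card_singleton]

lemma noK5 {V : Type} [DecidableEq V] (G : SimpleGraph V) (S : Set V)
    (h : (G.induce S).CliqueFree 5) (a b c d e : V)
    (ha : a ∈ S) (hb : b ∈ S) (hc : c ∈ S) (hd : d ∈ S) (he : e ∈ S)
    (hab : G.Adj a b) (hac : G.Adj a c) (had : G.Adj a d) (hae : G.Adj a e)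
    (hbc : G.Adj b c) (hbd : G.Adj b d) (hbe : G.Adj b e)
    (hcd : G.Adj c d) (hce : G.Adj c e) (hde : G.Adj d e) : False := by
  apply h ({⟨a, ha⟩, ⟨b, hb⟩, ⟨c, hc⟩, ⟨d, hd⟩, ⟨e, he⟩} : Finset S)
  constructor
  · intro x hx y hy hxy
    simp only [Finset.coe_insert, Set.mem_insert_iff, Finset.coe_singleton,
      Set.mem_singleton_iff] at hx hy
    rcases hx with rfl | rfl | rfl | rfl | rfl <;> rcases hy with rfl | rfl | rfl | rfl | rfl <;>
      first
        | exact (hxy rfl).elim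
        | (show G.Adj _ _; first | assumption | exact .symm (by assumption))
  · rw [Finset.card_insert_of_notMem (by simp [Subtype.ext_iff, hab.ne, hac.ne, had.ne, hae.ne]),
      Finset.card_insert_of_notMem (by simp [Subtype.ext_iff, hbc.ne, hbd.ne, hbe.ne]),
      Finset.card_insert_of_notMem (by simp [Subtype.ext_iff, hcd.ne, hce.ne]),
      Finset.card_insert_of_notMem (by simp [Subtype.ext_iff, hde.ne]), Finset.card_singleton]

lemma stmt13aux {V : Type} [DecidableEq V] (G : SimpleGraph V) (S : Set V)
    (hα : ∀ x y z : V, x ∈ S → y ∈ S → z ∈ S → x ≠ y → x ≠ z → y ≠ z →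
      G.Adj x y ∨ G.Adj x z ∨ G.Adj y z)
    (a b c d e f g h8 : V)
    (ma : a ∈ S) (me : e ∈ S) (mf : f ∈ S) (mg : g ∈ S) (mh : h8 ∈ S)
    (nae : a ≠ e) (naf : a ≠ f) (nag : a ≠ g)
    (nha : h8 ≠ a) (nhb : h8 ≠ b) (nhc : h8 ≠ c) (nhd : h8 ≠ d)
    (nhe : h8 ≠ e) (nhf : h8 ≠ f) (nhg : h8 ≠ g)
    (nbe : b ≠ e) (nbf : b ≠ f) (nbg : b ≠ g)
    (nce : c ≠ e) (ncf : c ≠ f) (ncg : c ≠ g)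
    (nde : d ≠ e) (ndf : d ≠ f) (ndg : d ≠ g)
    (hab : G.Adj a b) (hac : G.Adj a c) (had : G.Adj a d)
    (hbc : G.Adj b c) (hbd : G.Adj b d) (hcd : G.Adj c d)
    (hef : G.Adj e f) (heg : G.Adj e g) (hfg : G.Adj f g)
    (nAe : ¬ G.Adj h8 e) (nAf : ¬ G.Adj h8 f) (nAg : ¬ G.Adj h8 g)
    (nAa : ¬ G.Adj h8 a) (Ab : G.Adj h8 b) (Ac : G.Adj h8 c) (Ad : G.Adj h8 d) :
    ∃ u ∈ ({a, b, c, d} : Finset V),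
      (∀ x ∈ ({a, b, c, d} : Finset V), (¬ G.Adj h8 x ↔ x = u)) ∧
      G.Adj u e ∧ G.Adj u f ∧ G.Adj u g ∧
      G.IsNClique 4 (insert h8 (({a, b, c, d} : Finset V) \ {u})) ∧
      G.IsNClique 4 ({u, e, f, g} : Finset V) ∧
      Disjoint (insert h8 (({a, b, c, d} : Finset V) \ {u}))
        ({u, e, f, g} : Finset V) := by
  have aae : G.Adj a e := by
    rcases hα h8 a e mh ma me nha nhe nae with h | h | h
    · exact absurd h nAa
    · exact absurd h nAe
    · exact h
  have aaf : G.Adj a f := by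
    rcases hα h8 a f mh ma mf nha nhf naf with h | h | h
    · exact absurd h nAa
    · exact absurd h nAf
    · exact h
  have aag : G.Adj a g := by
    rcases hα h8 a g mh ma mg nha nhg nag with h | h | h
    · exact absurd h nAa
    · exact absurd h nAg
    · exact h
  have hset : (({a, b, c, d} : Finset V) \ {a}) = {b, c, d} := by
    ext x
    simp only [Finset.mem_sdiff, Finset.mem_insert, Finset.mem_singleton]
    constructor
    · rintro ⟨rfl | rfl | rfl | rfl, h2⟩ <;> simp_all
    · rintro (rfl | rfl | rfl)
      · exact ⟨Or.inr (Or.inl rfl), hab.ne'⟩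
      · exact ⟨Or.inr (Or.inr (Or.inl rfl)), hac.ne'⟩
      · exact ⟨Or.inr (Or.inr (Or.inr rfl)), had.ne'⟩
  refine ⟨a, by simp, ?_, aae, aaf, aag, ?_, ?_, ?_⟩
  · intro x hx
    simp only [Finset.mem_insert, Finset.mem_singleton] at hx
    rcases hx with rfl | rfl | rfl | rfl
    · exact iff_of_true nAa rfl
    · exact iff_of_false (not_not_intro Ab) hab.ne'
    · exact iff_of_false (not_not_intro Ac) hac.ne'
    · exact iff_of_false (not_not_intro Ad) had.ne'
  · rw [hset]
    exact clique4 G h8 b c d Ab Ac Ad hbc hbd hcd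
  · exact clique4 G a e f g aae aaf aag hef heg hfg
  · rw [hset, Finset.disjoint_left]
    intro x hx hx2
    simp only [Finset.mem_insert, Finset.mem_singleton] at hx hx2
    rcases hx with rfl | rfl | rfl | rfl <;> rcases hx2 with rfl | rfl | rfl | rfl <;>
      simp_all [SimpleGraph.irrefl]

set_option maxHeartbeats 1000000 in
/-- Let v be a vertex of degree 8 whose neighborhood N(v) =
{w₁,…,w₈} induces a subgraph with independence number at most 2 and no K₅, such that
{w₅,w₆,w₇,w₈} induces K₃ ∪ K₁ (w₈ isolated) and {w₁,w₂,w₃,w₄} is a clique. Then w₈ has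
exactly one non-neighbor u among {w₁,w₂,w₃,w₄}, u is complete to {w₅,w₆,w₇}, and N(v)
contains the two disjoint 4-cliques {w₈} ∪ ({w₁,w₂,w₃,w₄} \ {u}) and {u,w₅,w₆,w₇}. -/
theorem stmt13 (V : Type) [DecidableEq V] (G : SimpleGraph V) (v : V)
    (w1 w2 w3 w4 w5 w6 w7 w8 : V)
    (hnodup : [w1, w2, w3, w4, w5, w6, w7, w8].Nodup)
    (hN : G.neighborSet v = {w1, w2, w3, w4, w5, w6, w7, w8})
    (hα : ∀ a b c : V, a ∈ G.neighborSet v → b ∈ G.neighborSet v →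
      c ∈ G.neighborSet v → a ≠ b → a ≠ c → b ≠ c →
      G.Adj a b ∨ G.Adj a c ∨ G.Adj b c)
    (hK5 : (G.induce (G.neighborSet v)).CliqueFree 5)
    (hJ : G.Adj w5 w6 ∧ G.Adj w5 w7 ∧ G.Adj w6 w7 ∧
      ¬ G.Adj w8 w5 ∧ ¬ G.Adj w8 w6 ∧ ¬ G.Adj w8 w7)
    (hW : G.Adj w1 w2 ∧ G.Adj w1 w3 ∧ G.Adj w1 w4 ∧
      G.Adj w2 w3 ∧ G.Adj w2 w4 ∧ G.Adj w3 w4) :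
    ∃ u ∈ ({w1, w2, w3, w4} : Finset V),
      (∀ x ∈ ({w1, w2, w3, w4} : Finset V), (¬ G.Adj w8 x ↔ x = u)) ∧
      G.Adj u w5 ∧ G.Adj u w6 ∧ G.Adj u w7 ∧
      G.IsNClique 4 (insert w8 (({w1, w2, w3, w4} : Finset V) \ {u})) ∧
      G.IsNClique 4 ({u, w5, w6, w7} : Finset V) ∧
      Disjoint (insert w8 (({w1, w2, w3, w4} : Finset V) \ {u}))
        ({u, w5, w6, w7} : Finset V) := by
  obtain ⟨hJ1, hJ2, hJ3, hJ4, hJ5, hJ6⟩ := hJ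
  obtain ⟨hW1, hW2, hW3, hW4, hW5, hW6⟩ := hW
  simp only [List.nodup_cons, List.mem_cons, List.not_mem_nil, or_false, not_or,
    List.nodup_nil, and_true] at hnodup
  obtain ⟨⟨h12, h13, h14, h15, h16, h17, h18⟩, ⟨h23, h24, h25, h26, h27, h28⟩,
    ⟨h34, h35, h36, h37, h38⟩, ⟨h45, h46, h47, h48⟩, ⟨h56, h57, h58⟩, ⟨h67, h68⟩, h78, -⟩ := hnodup
  have m1 : w1 ∈ G.neighborSet v := by rw [hN]; simp
  have m2 : w2 ∈ G.neighborSet v := by rw [hN]; simp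
  have m3 : w3 ∈ G.neighborSet v := by rw [hN]; simp
  have m4 : w4 ∈ G.neighborSet v := by rw [hN]; simp
  have m5 : w5 ∈ G.neighborSet v := by rw [hN]; simp
  have m6 : w6 ∈ G.neighborSet v := by rw [hN]; simp
  have m7 : w7 ∈ G.neighborSet v := by rw [hN]; simp
  have m8 : w8 ∈ G.neighborSet v := by rw [hN]; simp
  -- any non-neighbor of w8 among the neighborhood is complete to {w5,w6,w7}
  have tri : ∀ x : V, x ∈ G.neighborSet v → x ≠ w5 → x ≠ w6 → x ≠ w7 → w8 ≠ x →
      ¬ G.Adj w8 x → G.Adj x w5 ∧ G.Adj x w6 ∧ G.Adj x w7 := by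
    intro x mx nx5 nx6 nx7 n8x nAx
    refine ⟨?_, ?_, ?_⟩
    · rcases hα w8 x w5 m8 mx m5 n8x (Ne.symm h58) nx5 with h | h | h
      · exact absurd h nAx
      · exact absurd h hJ4
      · exact h
    · rcases hα w8 x w6 m8 mx m6 n8x (Ne.symm h68) nx6 with h | h | h
      · exact absurd h nAx
      · exact absurd h hJ5
      · exact h
    · rcases hα w8 x w7 m8 mx m7 n8x (Ne.symm h78) nx7 with h | h | h
      · exact absurd h nAx
      · exact absurd h hJ6
      · exact h
  -- two adjacent non-neighbors of w8 would give a K5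
  have pair : ∀ x y : V, x ∈ G.neighborSet v → y ∈ G.neighborSet v → G.Adj x y →
      x ≠ w5 → x ≠ w6 → x ≠ w7 → w8 ≠ x → y ≠ w5 → y ≠ w6 → y ≠ w7 → w8 ≠ y →
      ¬ G.Adj w8 x → ¬ G.Adj w8 y → False := by
    intro x y mx my hxy nx5 nx6 nx7 n8x ny5 ny6 ny7 n8y nAx nAy
    obtain ⟨x5, x6, x7⟩ := tri x mx nx5 nx6 nx7 n8x nAx
    obtain ⟨y5, y6, y7⟩ := tri y my ny5 ny6 ny7 n8y nAy
    exact noK5 G _ hK5 x y w5 w6 w7 mx my m5 m6 m7 hxy x5 x6 x7 y5 y6 y7 hJ1 hJ2 hJ3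
  by_cases a1 : G.Adj w8 w1
  · by_cases a2 : G.Adj w8 w2
    · by_cases a3 : G.Adj w8 w3
      · by_cases a4 : G.Adj w8 w4
        · exact (noK5 G _ hK5 w1 w2 w3 w4 w8 m1 m2 m3 m4 m8
            hW1 hW2 hW3 a1.symm hW4 hW5 a2.symm hW6 a3.symm a4.symm).elim
        · -- u = w4
          have hset : ({w4, w1, w2, w3} : Finset V) = {w1, w2, w3, w4} := by
            ext x; simp only [Finset.mem_insert, Finset.mem_singleton]; tauto
          rw [← hset]
          exact stmt13aux G _ hα w4 w1 w2 w3 w5 w6 w7 w8 m4 m5 m6 m7 m8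
            h45 h46 h47 (Ne.symm h48) (Ne.symm h18) (Ne.symm h28) (Ne.symm h38)
            (Ne.symm h58) (Ne.symm h68) (Ne.symm h78)
            h15 h16 h17 h25 h26 h27 h35 h36 h37
            hW3.symm hW5.symm hW6.symm hW1 hW2 hW4
            hJ1 hJ2 hJ3 hJ4 hJ5 hJ6 a4 a1 a2 a3
      · -- u = w3
        have a4 : G.Adj w8 w4 := by
          by_contra a4
          exact pair w3 w4 m3 m4 hW6 h35 h36 h37 (Ne.symm h38) h45 h46 h47 (Ne.symm h48) a3 a4
        have hset : ({w3, w1, w2, w4} : Finset V) = {w1, w2, w3, w4} := by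
          ext x; simp only [Finset.mem_insert, Finset.mem_singleton]; tauto
        rw [← hset]
        exact stmt13aux G _ hα w3 w1 w2 w4 w5 w6 w7 w8 m3 m5 m6 m7 m8
          h35 h36 h37 (Ne.symm h38) (Ne.symm h18) (Ne.symm h28) (Ne.symm h48)
          (Ne.symm h58) (Ne.symm h68) (Ne.symm h78)
          h15 h16 h17 h25 h26 h27 h45 h46 h47
          hW2.symm hW4.symm hW6 hW1 hW3 hW5
          hJ1 hJ2 hJ3 hJ4 hJ5 hJ6 a3 a1 a2 a4
    · -- u = w2
      have a3 : G.Adj w8 w3 := by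
        by_contra a3
        exact pair w2 w3 m2 m3 hW4 h25 h26 h27 (Ne.symm h28) h35 h36 h37 (Ne.symm h38) a2 a3
      have a4 : G.Adj w8 w4 := by
        by_contra a4
        exact pair w2 w4 m2 m4 hW5 h25 h26 h27 (Ne.symm h28) h45 h46 h47 (Ne.symm h48) a2 a4
      have hset : ({w2, w1, w3, w4} : Finset V) = {w1, w2, w3, w4} := by
        ext x; simp only [Finset.mem_insert, Finset.mem_singleton]; tauto
      rw [← hset]
      exact stmt13aux G _ hα w2 w1 w3 w4 w5 w6 w7 w8 m2 m5 m6 m7 m8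
        h25 h26 h27 (Ne.symm h28) (Ne.symm h18) (Ne.symm h38) (Ne.symm h48)
        (Ne.symm h58) (Ne.symm h68) (Ne.symm h78)
        h15 h16 h17 h35 h36 h37 h45 h46 h47
        hW1.symm hW4 hW5 hW2 hW3 hW6
        hJ1 hJ2 hJ3 hJ4 hJ5 hJ6 a2 a1 a3 a4
  · -- u = w1
    have a2 : G.Adj w8 w2 := by
      by_contra a2
      exact pair w1 w2 m1 m2 hW1 h15 h16 h17 (Ne.symm h18) h25 h26 h27 (Ne.symm h28) a1 a2
    have a3 : G.Adj w8 w3 := by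
      by_contra a3
      exact pair w1 w3 m1 m3 hW2 h15 h16 h17 (Ne.symm h18) h35 h36 h37 (Ne.symm h38) a1 a3
    have a4 : G.Adj w8 w4 := by
      by_contra a4
      exact pair w1 w4 m1 m4 hW3 h15 h16 h17 (Ne.symm h18) h45 h46 h47 (Ne.symm h48) a1 a4
    exact stmt13aux G _ hα w1 w2 w3 w4 w5 w6 w7 w8 m1 m5 m6 m7 m8
      h15 h16 h17 (Ne.symm h18) (Ne.symm h28) (Ne.symm h38) (Ne.symm h48)
      (Ne.symm h58) (Ne.symm h68) (Ne.symm h78)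
      h25 h26 h27 h35 h36 h37 h45 h46 h47
      hW1 hW2 hW3 hW4 hW5 hW6
      hJ1 hJ2 hJ3 hJ4 hJ5 hJ6 a1 a2 a3 a4
end

section
/- Let G be an 8-contraction-critical graph with no K_7 minor, and let v be a vertex of degree 9 in G. Then the subgraph induced on N(v) contains a triangle (K_3). -/
open Finset

namespace SimpleGraph

section Ramsey

variable {α : Type*} {G : SimpleGraph α}

theorem isNIndepSet_triple_iff [DecidableEq α] {a b c : α} :
    G.IsNIndepSet 3 {a, b, c} ↔ Gᶜ.Adj a b ∧ Gᶜ.Adj a c ∧ Gᶜ.Adj b c := by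
  rw [← isNClique_compl, is3Clique_triple_iff]

theorem IsNIndepSet.insert [DecidableEq α] {n : ℕ} {s : Finset α} {a : α}
    (hs : G.IsNIndepSet n s) (h : ∀ b ∈ s, Gᶜ.Adj a b) : G.IsNIndepSet (n + 1) (insert a s) := by
  rw [← isNClique_compl] at hs ⊢
  exact hs.insert h

theorem CliqueFree.isNIndepSet_of_subset_neighborFinset [Fintype α] [DecidableRel G.Adj]
    (h : G.CliqueFree 3) {v : α} {s : Finset α} (hs : s ⊆ G.neighborFinset v) :
    G.IsNIndepSet #s s :=
  ⟨(G.isIndepSet_neighborSet_of_triangleFree h v).mono (by simpa [← coe_neighborFinset] using hs),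
    rfl⟩

theorem IsNIndepSet.map_induce {n : ℕ} {s : Set α} {t : Finset s}
    (ht : (G.induce s).IsNIndepSet n t) :
    G.IsNIndepSet n (t.map (Function.Embedding.subtype _)) := by
  refine ⟨?_, by rw [card_map, ht.card_eq]⟩
  rintro _ hx _ hy hab
  obtain ⟨a, ha, rfl⟩ := mem_map.1 hx
  obtain ⟨b, hb, rfl⟩ := mem_map.1 hy
  exact ht.isIndepSet ha hb (fun h => hab (congrArg Subtype.val h))

-- `R(3, 3) ≤ 6`
theorem CliqueFree.exists_isNIndepSet_three_subset [Fintype α] [DecidableRel G.Adj]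
    (h : G.CliqueFree 3) {M : Finset α} (hM : 6 ≤ #M) : ∃ s ⊆ M, G.IsNIndepSet 3 s := by
  classical
  obtain ⟨v, hvM⟩ : M.Nonempty := card_pos.1 (by omega)
  have hsplit := card_filter_add_card_filter_not (s := M.erase v) (G.Adj v)
  rw [card_erase_of_mem hvM] at hsplit
  by_cases hN : 3 ≤ #((M.erase v).filter (G.Adj v))
  · obtain ⟨s, hsN, hs⟩ := exists_subset_card_eq hN
    refine ⟨s, hsN.trans ((filter_subset _ _).trans (erase_subset _ _)), hs ▸ ?_⟩
    exact h.isNIndepSet_of_subset_neighborFinset fun x hx => by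
      simpa using (mem_filter.1 (hsN hx)).2
  · obtain ⟨t, htP, ht⟩ :=
      exists_subset_card_eq (show 3 ≤ #((M.erase v).filter (¬ G.Adj v ·)) by omega)
    have hnot : ¬ G.IsClique (t : Set α) := fun hc => h t ⟨hc, ht⟩
    obtain ⟨a, ha, b, hb, hab, hnadj⟩ : ∃ a ∈ t, ∃ b ∈ t, a ≠ b ∧ ¬ G.Adj a b := by
      simpa [IsClique, Set.Pairwise] using hnot
    have hP : ∀ x ∈ t, x ∈ M ∧ Gᶜ.Adj v x := fun x hx => by
      obtain ⟨hx, hvx⟩ := mem_filter.1 (htP hx)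
      exact ⟨mem_of_mem_erase hx, (ne_of_mem_erase hx).symm, hvx⟩
    refine ⟨{v, a, b}, ?_, isNIndepSet_triple_iff.2 ⟨(hP a ha).2, (hP b hb).2, hab, hnadj⟩⟩
    simp [insert_subset_iff, hvM, (hP a ha).1, (hP b hb).1]

-- `R(3, 4) ≤ 9`
theorem CliqueFree.exists_isNIndepSet_four [Fintype α] [DecidableRel G.Adj]
    (h : G.CliqueFree 3) (hcard : 9 ≤ Fintype.card α) : ∃ s, G.IsNIndepSet 4 s := by
  classical
  by_contra! hno
  have hdeg_le : ∀ v, G.degree v ≤ 3 := fun v => by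
    by_contra! hv
    obtain ⟨s, hsN, hs⟩ := exists_subset_card_eq (s := G.neighborFinset v) (n := 4) (by simpa)
    exact hno s (hs ▸ h.isNIndepSet_of_subset_neighborFinset hsN)
  have hcard_le : ∀ v, Fintype.card α ≤ G.degree v + 6 := fun v => by
    by_contra! hv
    set M := univ \ insert v (G.neighborFinset v)
    have hM : 6 ≤ #M := by
      have := card_insert_le v (G.neighborFinset v)
      rw [card_sdiff_of_subset (subset_univ _), card_univ, card_neighborFinset_eq_degree] at *
      omega
    obtain ⟨s, hsM, hs⟩ := h.exists_isNIndepSet_three_subset hM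
    have hvs : ∀ x ∈ s, Gᶜ.Adj v x := fun x hx => by
      have := hsM hx
      simp only [M, mem_sdiff, mem_insert, mem_neighborFinset, not_or] at this
      exact ⟨Ne.symm this.2.1, this.2.2⟩
    exact hno _ (hs.insert hvs)
  -- now `G` is 3-regular on 9 vertices, which contradicts the handshake lemma
  have hsum := G.sum_degrees_eq_twice_card_edges
  rw [sum_congr rfl fun v _ => show G.degree v = 3 by
    have := hdeg_le v; have := hcard_le v; omega] at hsum
  obtain ⟨v⟩ : Nonempty α := Fintype.card_pos_iff.1 (by omega)
  have := hcard_le v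
  have := hdeg_le v
  simp at hsum
  omega

end Ramsey

section Contraction

variable {V W : Type} (G : SimpleGraph V)

def contractFibres (π : V → W) : SimpleGraph W :=
  fromRel (Relation.Map G.Adj π π)

theorem minorOf_contractFibres (π : V → W) (hπ : ∀ w, (G.induce (π ⁻¹' {w})).Connected) :
    MinorOf (G.contractFibres π) G := by
  refine ⟨fun w => π ⁻¹' {w}, fun w => ?_, hπ, fun w w' hne => ?_, fun w w' hadj => ?_⟩
  · obtain ⟨⟨x, hx⟩⟩ := (hπ w).nonempty
    exact ⟨x, hx⟩
  · exact Disjoint.preimage π (Set.disjoint_singleton.2 hne)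
  · obtain ⟨-, ⟨a, b, hab, rfl, rfl⟩ | ⟨a, b, hab, rfl, rfl⟩⟩ := hadj
    exacts [⟨a, rfl, b, rfl, hab⟩, ⟨b, rfl, a, rfl, hab.symm⟩]

theorem contractFibres_adj_of_adj (π : V → W) {a b : V} (hπ : π a ≠ π b) (hab : G.Adj a b) :
    (G.contractFibres π).Adj (π a) (π b) :=
  ⟨hπ, Or.inl ⟨a, b, hab, rfl, rfl⟩⟩

theorem induce_insert_connected_of_subset_neighborSet {v : V} {s : Set V}
    (hs : s ⊆ G.neighborSet v) : (G.induce (insert v s)).Connected :=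
  (connected_iff_exists_forall_reachable _).2 ⟨⟨v, Set.mem_insert _ _⟩, fun ⟨x, hx⟩ => by
    rcases Set.mem_insert_iff.1 hx with rfl | hx
    · rfl
    · exact Adj.reachable (show G.Adj v x from hs hx)⟩

variable [DecidableEq V] (I : Finset V) {v : V} (hv : v ∉ I)

def collapse : V → {x // x ∉ I} :=
  fun x => if h : x ∈ I then ⟨v, hv⟩ else ⟨x, h⟩

variable {I}

theorem collapse_of_notMem {x : V} (hx : x ∉ I) : collapse I hv x = ⟨x, hx⟩ :=
  dif_neg hx

theorem collapse_eq_collapse_iff {a b : V} :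
    collapse I hv a = collapse I hv b ↔ a = b ∨ a ∈ insert v I ∧ b ∈ insert v I := by
  unfold collapse
  split_ifs <;> simp [Subtype.ext_iff] <;> grind

theorem preimage_collapse {x : V} (hx : x ∉ I) :
    collapse I hv ⁻¹' {⟨x, hx⟩} = insert x (if x = v then ↑I else ∅) := by
  ext a
  rw [Set.mem_preimage, Set.mem_singleton_iff, ← collapse_of_notMem hv hx,
    collapse_eq_collapse_iff]
  split_ifs <;> simp_all

theorem induce_preimage_collapse_connected (hI : ↑I ⊆ G.neighborSet v) (w : {x // x ∉ I}) :
    (G.induce (collapse I hv ⁻¹' {w})).Connected := by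
  obtain ⟨x, hx⟩ := w
  rw [preimage_collapse]
  by_cases hxv : x = v
  · subst hxv
    rw [if_pos rfl]
    exact G.induce_insert_connected_of_subset_neighborSet hI
  · rw [if_neg hxv]
    exact G.induce_insert_connected_of_subset_neighborSet (Set.empty_subset _)

theorem collapse_ne_collapse_of_adj (hI : G.IsIndepSet I) {a b : V} (ha : a ≠ v) (hb : b ≠ v)
    (hab : G.Adj a b) : collapse I hv a ≠ collapse I hv b := fun h => by
  rcases (collapse_eq_collapse_iff hv).1 h with rfl | ⟨ha', hb'⟩
  · exact G.loopless.irrefl a hab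
  · exact hI (mem_of_mem_insert_of_ne ha' ha) (mem_of_mem_insert_of_ne hb' hb) hab.ne hab

theorem card_image_neighborFinset_collapse_le [Fintype V] [DecidableRel G.Adj] {β : Type*}
    [DecidableEq β] (hIv : I ⊆ G.neighborFinset v) (g : {x // x ∉ I} → β) :
    #((G.neighborFinset v).image (g ∘ collapse I hv)) ≤ G.degree v - #I + 1 := by
  have hsub : (G.neighborFinset v).image (g ∘ collapse I hv) ⊆
      insert (g (collapse I hv v)) ((G.neighborFinset v \ I).image (g ∘ collapse I hv)) := by
    intro c hc
    obtain ⟨x, hx, rfl⟩ := mem_image.1 hc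
    by_cases hxI : x ∈ I
    · have : collapse I hv x = collapse I hv v :=
        (collapse_eq_collapse_iff hv).2 (Or.inr ⟨by simp [hxI], by simp⟩)
      simp [this]
    · exact mem_insert_of_mem (mem_image_of_mem _ (mem_sdiff.2 ⟨hx, hxI⟩))
  calc #((G.neighborFinset v).image (g ∘ collapse I hv))
      ≤ #((G.neighborFinset v \ I).image (g ∘ collapse I hv)) + 1 :=
        (card_le_card hsub).trans (card_insert_le _ _)
    _ ≤ #(G.neighborFinset v \ I) + 1 := by gcongr; exact card_image_le
    _ = G.degree v - #I + 1 := by rw [card_sdiff_of_subset hIv, card_neighborFinset_eq_degree]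

end Contraction

theorem colorable_of_card_image_neighborFinset_lt {V : Type*} [Fintype V] {G : SimpleGraph V}
    [DecidableRel G.Adj] {n : ℕ} (v : V) (g : V → Fin n)
    (hg : ∀ ⦃a b⦄, a ≠ v → b ≠ v → G.Adj a b → g a ≠ g b)
    (hv : #((G.neighborFinset v).image g) < n) : G.Colorable n := by
  classical
  obtain ⟨c, -, hc⟩ := exists_mem_notMem_of_card_lt_card (s := (G.neighborFinset v).image g)
    (t := univ) (by rwa [card_univ, Fintype.card_fin])
  have hnbr : ∀ x, G.Adj v x → g x ≠ c := fun x hx h =>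
    hc (mem_image.2 ⟨x, (mem_neighborFinset _ _ _).2 hx, h⟩)
  refine ⟨Coloring.mk (Function.update g v c) fun {a b} hab => ?_⟩
  by_cases ha : a = v
  · subst ha
    simpa [hab.ne'] using (hnbr b hab).symm
  by_cases hb : b = v
  · subst hb
    simpa [ha] using hnbr a hab.symm
  simpa [ha, hb] using hg ha hb hab

end SimpleGraph

open SimpleGraph

-- Dirac's lemma. Contracting `v` together with `I` gives a proper minor; a `(k - 1)`-colouring
-- of it pulls back to `G - v`, where `N(v)` sees at most `d(v) - |I| + 1` colours.
theorem ContractionCritical.card_add_le_degree_add_two {V : Type} [Fintype V] {G : SimpleGraph V}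
    [DecidableRel G.Adj] {k : ℕ} (hG : ContractionCritical k G) {v : V} {I : Finset V}
    (hIv : I ⊆ G.neighborFinset v) (hI : G.IsIndepSet I) (hne : I.Nonempty) :
    #I + k ≤ G.degree v + 2 := by
  classical
  by_contra! hlt
  have hvI : v ∉ I := fun h => G.loopless.irrefl v ((mem_neighborFinset _ _ _).1 (hIv h))
  have hminor : MinorOf (G.contractFibres (collapse I hvI)) G := G.minorOf_contractFibres _
    (G.induce_preimage_collapse_connected hvI (by simpa [← coe_neighborFinset] using hIv))
  have hproper : IsEmpty (G.contractFibres (collapse I hvI) ≃g G) := ⟨fun e => by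
    have := Fintype.card_congr e.toEquiv
    rw [Fintype.card_subtype_compl, Fintype.card_coe] at this
    have := hne.card_pos
    have := card_le_univ I
    omega⟩
  obtain ⟨C⟩ := hG.2 _ inferInstance _ hminor hproper
  have hIcard : #I ≤ G.degree v := card_neighborFinset_eq_degree G v ▸ card_le_card hIv
  have hcol : G.Colorable (k - 1) := by
    refine colorable_of_card_image_neighborFinset_lt v (C ∘ collapse I hvI) (fun a b ha hb hab => ?_) ?_
    · exact C.valid (G.contractFibres_adj_of_adj _
        (G.collapse_ne_collapse_of_adj hvI hI ha hb hab) hab)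
    · have := G.card_image_neighborFinset_collapse_le hvI hIv C
      omega
  have hle := hcol.chromaticNumber_le
  rw [hG.1] at hle
  norm_cast at hle
  omega

theorem stmt15_general (V : Type) [Fintype V] (G : SimpleGraph V) [DecidableRel G.Adj]
    (hG : ContractionCritical 8 G)
    (v : V) (hv : G.degree v = 9) :
    ¬ (G.induce (G.neighborSet v)).CliqueFree 3 := by
  intro hcf
  obtain ⟨s, hs⟩ := hcf.exists_isNIndepSet_four ((card_neighborSet_eq_degree G v).trans hv).ge
  replace hs := hs.map_induce
  have hsub : s.map (Function.Embedding.subtype _) ⊆ G.neighborFinset v := fun x hx => by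
    obtain ⟨⟨y, hy⟩, -, rfl⟩ := mem_map.1 hx
    simpa using hy
  have := hG.card_add_le_degree_add_two hsub hs.isIndepSet
    (card_pos.1 (by rw [hs.card_eq]; omega))
  rw [hs.card_eq, hv] at this
  omega

/-- Let G be an 8-contraction-critical graph with no K₇ minor and let v be
a vertex of degree 9. Then the subgraph induced on N(v) contains a triangle. -/
theorem stmt15 (V : Type) [Fintype V] (G : SimpleGraph V) [DecidableRel G.Adj]
    (hG : ContractionCritical 8 G)
    (hK7 : ¬ MinorOf (⊤ : SimpleGraph (Fin 7)) G)
    (v : V) (hv : G.degree v = 9) :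
    ¬ (G.induce (G.neighborSet v)).CliqueFree 3 :=
  stmt15_general V G hG v hv
end
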